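/- Let r ≥ 2 and k ≥ 1 be integers and Δ: ℕ^(r) ↠ [k] a surjective colouring. Let m ≥ 2, let X ⊆ ℕ be infinite with γ(X) = m, and let A ⊆ X be a finite set of size a such that the colour of every r-subset e of X is determined by e ∩ A, and γ(X \ {v}) < m for all v ∈ A. Then: (1) for every v ∈ A, the set X₁ = X \ {v} satisfies m - Σ_{i=0}^{r-1} C(a-1,i) ≤ γ(X₁) < m; and (2) there exists v ∈ A such that X₂ = X \ {v} satisfies m - r(m-1)/a ≤ γ(X₂) < m, where the lower bound is an inequality of rationals. -/

import Mathlib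

open Finset

/-- The set of colours attained by `Δ` on `r`-element subsets of `X`. -/
def coloursOn {α : Type*} (r : ℕ) (Δ : Finset ℕ → α) (X : Set ℕ) : Set α :=
  Δ '' {e : Finset ℕ | ↑e ⊆ X ∧ e.card = r}

/-- `γ(X)`: the number of colours attained by `Δ` on `r`-element subsets of `X`. -/
noncomputable def gamma {α : Type*} (r : ℕ) (Δ : Finset ℕ → α) (X : Set ℕ) : ℕ :=
  (coloursOn r Δ X).ncard

/-- `F_Δ`: the set of values `γ(X)` over infinite subsets `X ⊆ ℕ`. -/
def Fdelta {α : Type*} (r : ℕ) (Δ : Finset ℕ → α) : Set ℕ :=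
  {m | ∃ X : Set ℕ, X.Infinite ∧ gamma r Δ X = m}

/-- `Δ` is a surjective colouring of `ℕ^(r)`, the `r`-element subsets of `ℕ`,
onto the colour set `[k] = {1, …, k}`. -/
def IsColouring (r k : ℕ) (Δ : Finset ℕ → ℕ) : Prop :=
  (∀ e : Finset ℕ, e.card = r → Δ e ∈ Finset.Icc 1 k) ∧
  ∀ c ∈ Finset.Icc 1 k, ∃ e : Finset ℕ, e.card = r ∧ Δ e = c

/-! A colour lost when `v` is deleted from `X` lives only on edges through `v`. As colours are
determined by traces on `A`, such a colour is determined by a trace containing `v`, i.e. by a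
subset of `A \ {v}` of size `< r`; this gives (1). For (2), the colour of an edge disjoint from
`A` is never lost, and any other colour can only be lost at the `r` vertices of one fixed edge of
that colour; double counting yields a `v` losing at most `r(m-1)/a` colours. -/

section LostColours

variable {α : Type*} {r : ℕ} {Δ : Finset ℕ → α} {X : Set ℕ} {A : Finset ℕ}

def IsDeterminedBy (r : ℕ) (Δ : Finset ℕ → α) (X : Set ℕ) (A : Finset ℕ) : Prop :=
  ∀ e₁ e₂ : Finset ℕ, ↑e₁ ⊆ X → e₁.card = r → ↑e₂ ⊆ X → e₂.card = r →
    e₁ ∩ A = e₂ ∩ A → Δ e₁ = Δ e₂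

def lostColours (r : ℕ) (Δ : Finset ℕ → α) (X : Set ℕ) (v : ℕ) : Set α :=
  coloursOn r Δ X \ coloursOn r Δ (X \ {v})

theorem coloursOn_mono {Y : Set ℕ} (h : X ⊆ Y) : coloursOn r Δ X ⊆ coloursOn r Δ Y :=
  Set.image_mono fun _ ⟨he, hr⟩ => ⟨he.trans h, hr⟩

theorem mem_of_mem_lostColours {v : ℕ} {c : α} (hc : c ∈ lostColours r Δ X v) {e : Finset ℕ}
    (heX : ↑e ⊆ X) (her : e.card = r) (hec : Δ e = c) : v ∈ e := by
  by_contra hv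
  exact hc.2 ⟨e, ⟨fun x hx => ⟨heX hx, fun hxv => hv (hxv ▸ hx)⟩, her⟩, hec⟩

theorem gamma_le_gamma_sdiff_add_ncard_lostColours (v : ℕ) :
    gamma r Δ X ≤ gamma r Δ (X \ {v}) + (lostColours r Δ X v).ncard := by
  have hsplit : lostColours r Δ X v ∪ coloursOn r Δ (X \ {v}) = coloursOn r Δ X :=
    Set.sdiff_union_of_subset (coloursOn_mono Set.sdiff_subset)
  rw [gamma, gamma, ← hsplit, add_comm]
  exact Set.ncard_union_le _ _

theorem ncard_lostColours_le (hdet : IsDeterminedBy r Δ X A) {v : ℕ} (hv : v ∈ A) :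
    (lostColours r Δ X v).ncard ≤ ∑ i ∈ range r, (A.card - 1).choose i := by
  have hedge : ∀ c ∈ lostColours r Δ X v, ∃ e : Finset ℕ, ↑e ⊆ X ∧ e.card = r ∧ Δ e = c := by
    rintro c ⟨⟨e, ⟨heX, her⟩, rfl⟩, -⟩
    exact ⟨e, heX, her, rfl⟩
  choose! edge hedgeX hedger hedgec using hedge
  have hv_mem : ∀ c ∈ lostColours r Δ X v, v ∈ edge c ∩ A := fun c hc =>
    mem_inter.2 ⟨mem_of_mem_lostColours hc (hedgeX c hc) (hedger c hc) (hedgec c hc), hv⟩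
  let traces := (range r).biUnion fun i => (A.erase v).powersetCard i
  calc (lostColours r Δ X v).ncard
      ≤ (traces : Set (Finset ℕ)).ncard := by
        refine Set.ncard_le_ncard_of_injOn (fun c => (edge c ∩ A).erase v) ?_ ?_
        · intro c hc
          have hcard : (edge c ∩ A).card ≤ r := hedger c hc ▸ card_le_card inter_subset_left
          have := card_erase_of_mem (hv_mem c hc)
          have := card_pos.2 ⟨v, hv_mem c hc⟩
          simp only [traces, coe_biUnion, Set.mem_iUnion, mem_coe, mem_range,
            mem_powersetCard]
          exact ⟨_, by omega, erase_subset_erase v inter_subset_right, rfl⟩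
        · intro c₁ hc₁ c₂ hc₂ (htrace : (edge c₁ ∩ A).erase v = (edge c₂ ∩ A).erase v)
          have htrace' : edge c₁ ∩ A = edge c₂ ∩ A := by
            rw [← insert_erase (hv_mem c₁ hc₁), htrace, insert_erase (hv_mem c₂ hc₂)]
          rw [← hedgec c₁ hc₁, ← hedgec c₂ hc₂]
          exact hdet _ _ (hedgeX c₁ hc₁) (hedger c₁ hc₁) (hedgeX c₂ hc₂) (hedger c₂ hc₂) htrace'
    _ = traces.card := Set.ncard_coe_finset _
    _ ≤ ∑ i ∈ range r, ((A.erase v).powersetCard i).card := card_biUnion_le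
    _ = ∑ i ∈ range r, (A.card - 1).choose i := by
        simp only [card_powersetCard, card_erase_of_mem hv]

theorem exists_card_mul_ncard_lostColours_le (hfin : (coloursOn r Δ X).Finite)
    {e₀ : Finset ℕ} (he₀X : ↑e₀ ⊆ X \ ↑A) (he₀r : e₀.card = r) (hA : A.Nonempty) :
    ∃ v ∈ A, A.card * (lostColours r Δ X v).ncard ≤ (gamma r Δ X - 1) * r := by
  classical
  have he₀X' : ↑e₀ ⊆ X := fun x hx => (he₀X hx).1
  have hc₀ : Δ e₀ ∈ coloursOn r Δ X := ⟨e₀, ⟨he₀X', he₀r⟩, rfl⟩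
  let others := (hfin.sdiff (t := {Δ e₀})).toFinset
  have hlost_sub : ∀ v ∈ A, lostColours r Δ X v ⊆ ↑others := by
    intro v hv c hc
    refine (hfin.sdiff).mem_toFinset.2 ⟨hc.1, ?_⟩
    rintro rfl
    exact (he₀X (mem_of_mem_lostColours hc he₀X' he₀r rfl)).2 hv
  obtain ⟨v, hv, hmin⟩ := exists_min_image A (fun w => (lostColours r Δ X w).ncard) hA
  refine ⟨v, hv, ?_⟩
  have hothers : others.card = gamma r Δ X - 1 := by
    rw [← Set.ncard_coe_finset, Set.Finite.coe_toFinset, Set.ncard_sdiff_singleton_of_mem hc₀]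
    rfl
  rw [← hothers]
  refine card_mul_le_card_mul (fun w c => c ∈ lostColours r Δ X w) (fun w hw => ?_) ?_
  · rw [← Set.ncard_coe_finset]
    exact (hmin w hw).trans
      (Set.ncard_le_ncard fun c hc => (mem_bipartiteAbove _).2 ⟨hlost_sub w hw hc, hc⟩)
  · intro c hc
    obtain ⟨e, ⟨heX, her⟩, rfl⟩ := ((hfin.sdiff).mem_toFinset.1 hc).1
    rw [← her]
    exact card_le_card fun w hw =>
      mem_of_mem_lostColours (mem_bipartiteBelow _ |>.1 hw).2 heX rfl rfl

theorem nonempty_of_isDeterminedBy (hdet : IsDeterminedBy r Δ X A) (h : 1 < gamma r Δ X) :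
    A.Nonempty := by
  rw [nonempty_iff_ne_empty]
  rintro rfl
  have hsub : (coloursOn r Δ X).Subsingleton := by
    rintro _ ⟨e₁, ⟨he₁X, he₁r⟩, rfl⟩ _ ⟨e₂, ⟨he₂X, he₂r⟩, rfl⟩
    exact hdet e₁ e₂ he₁X he₁r he₂X he₂r (by simp)
  exact (Set.ncard_le_one hsub.finite |>.2 hsub).not_gt h

end LostColours

theorem claim_B_general (r : ℕ) (Δ : Finset ℕ → ℕ) (m : ℕ) (hm2 : 2 ≤ m)
    (X : Set ℕ) (hX : X.Infinite) (hXm : gamma r Δ X = m)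
    (A : Finset ℕ) (a : ℕ) (ha : a = A.card)
    (hdet : ∀ e₁ e₂ : Finset ℕ, ↑e₁ ⊆ X → e₁.card = r → ↑e₂ ⊆ X → e₂.card = r →
      e₁ ∩ A = e₂ ∩ A → Δ e₁ = Δ e₂)
    (hdel : ∀ v ∈ A, gamma r Δ (X \ {v}) < m) :
    (∀ v ∈ A,
      (m : ℚ) - ((∑ i ∈ Finset.range r, Nat.choose (a - 1) i : ℕ) : ℚ)
          ≤ (gamma r Δ (X \ {v}) : ℚ) ∧
      gamma r Δ (X \ {v}) < m) ∧
    ∃ v ∈ A,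
      (m : ℚ) - (r : ℚ) * ((m : ℚ) - 1) / (a : ℚ) ≤ (gamma r Δ (X \ {v}) : ℚ) ∧
      gamma r Δ (X \ {v}) < m := by
  subst ha hXm
  have hsplit (v : ℕ) : gamma r Δ X ≤ gamma r Δ (X \ {v}) + (lostColours r Δ X v).ncard :=
    gamma_le_gamma_sdiff_add_ncard_lostColours v
  refine ⟨fun v hv => ⟨?_, hdel v hv⟩, ?_⟩
  · have := ncard_lostColours_le hdet hv
    rw [sub_le_iff_le_add]
    exact_mod_cast (hsplit v).trans (by omega)
  have hfin : (coloursOn r Δ X).Finite :=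
    Set.finite_of_ncard_ne_zero (by unfold gamma at hm2; omega)
  obtain ⟨e₀, he₀X, he₀r⟩ := (hX.sdiff A.finite_toSet).exists_subset_card_eq r
  have hA := nonempty_of_isDeterminedBy hdet (by omega)
  obtain ⟨v, hv, hcount⟩ := exists_card_mul_ncard_lostColours_le hfin he₀X he₀r hA
  refine ⟨v, hv, ?_, hdel v hv⟩
  have hapos : (0 : ℚ) < A.card := by exact_mod_cast hA.card_pos
  have hcountQ : (A.card : ℚ) * (lostColours r Δ X v).ncard ≤ ((gamma r Δ X : ℚ) - 1) * r := by
    rw [← Nat.cast_one, ← Nat.cast_sub (by omega)]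
    exact_mod_cast hcount
  have hlost : ((lostColours r Δ X v).ncard : ℚ) ≤ r * ((gamma r Δ X : ℚ) - 1) / A.card := by
    rw [le_div_iff₀ hapos]
    linarith
  have hsplitQ : (gamma r Δ X : ℚ) ≤ gamma r Δ (X \ {v}) + (lostColours r Δ X v).ncard := by
    exact_mod_cast hsplit v
  linarith

/-- **Claim B.** Let `X` be infinite with `γ(X) = m ≥ 2` and let `A ⊆ X` be finite of size
`a` such that colours of `r`-subsets of `X` are determined by their intersection with `A`
and `γ(X \ {v}) < m` for all `v ∈ A`. Then (1) for every `v ∈ A`,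
`m - Σ_{i=0}^{r-1} C(a-1,i) ≤ γ(X \ {v}) < m`, and (2) there is `v ∈ A` with
`m - r(m-1)/a ≤ γ(X \ {v}) < m`. -/
theorem claim_B (r k : ℕ) (hr : 2 ≤ r) (hk : 1 ≤ k) (Δ : Finset ℕ → ℕ)
    (hΔ : IsColouring r k Δ) (m : ℕ) (hm2 : 2 ≤ m)
    (X : Set ℕ) (hX : X.Infinite) (hXm : gamma r Δ X = m)
    (A : Finset ℕ) (hAX : ↑A ⊆ X) (a : ℕ) (ha : a = A.card)
    (hdet : ∀ e₁ e₂ : Finset ℕ, ↑e₁ ⊆ X → e₁.card = r → ↑e₂ ⊆ X → e₂.card = r →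
      e₁ ∩ A = e₂ ∩ A → Δ e₁ = Δ e₂)
    (hdel : ∀ v ∈ A, gamma r Δ (X \ {v}) < m) :
    (∀ v ∈ A,
      (m : ℚ) - ((∑ i ∈ Finset.range r, Nat.choose (a - 1) i : ℕ) : ℚ)
          ≤ (gamma r Δ (X \ {v}) : ℚ) ∧
      gamma r Δ (X \ {v}) < m) ∧
    ∃ v ∈ A,
      (m : ℚ) - (r : ℚ) * ((m : ℚ) - 1) / (a : ℚ) ≤ (gamma r Δ (X \ {v}) : ℚ) ∧
      gamma r Δ (X \ {v}) < m :=
  claim_B_general r Δ m hm2 X hX hXm A a ha hdet hdel
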